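/- (General V increment) If T ≥ Dμ*/Δ, then for every node s and every integer N ≥ 0, V(s, T+N) = V(s, T) + N·μ*. -/

import Mathlib

open Finset
open scoped ENNReal

/-- A path `p` is admissible up to time `T` if consecutive nodes are adjacent. -/
def Adm {S : Type*} (adj : S → S → Prop) (p : ℕ → S) (T : ℕ) : Prop :=
  ∀ t < T, adj (p t) (p (t + 1))

/-- Cumulative expected reward of the path `p 0, p 1, ..., p T`. -/
noncomputable def Vpath {S : Type*} (μ : S → ℝ) (p : ℕ → S) (T : ℕ) : ℝ :=
  ∑ t ∈ Finset.range (T + 1), μ (p t)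

/-- Optimal `T`-step cumulative expected reward starting from node `s`. -/
noncomputable def Vopt {S : Type*} (adj : S → S → Prop) (μ : S → ℝ) (s : S) (T : ℕ) : ℝ :=
  sSup {v | ∃ p : ℕ → S, p 0 = s ∧ Adm adj p T ∧ Vpath μ p T = v}

/-- Infinite-horizon undiscounted regret (total cost) of a stationary policy `π`
starting from node `s`, as a limit (`tsum` of the nonnegative costs). -/
noncomputable def Rinf {S : Type*} (μ : S → ℝ) (μstar : ℝ) (π : S → S) (s : S) : ℝ≥0∞ :=
  ∑' t : ℕ, ENNReal.ofReal (μstar - μ (π^[t] s))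

/-- The sufficient planning horizon `T_G = ⌈D μ* / Δ⌉`. -/
noncomputable def TG (D : ℕ) (μstar Δ : ℝ) : ℕ :=
  Nat.ceil ((D : ℝ) * μstar / Δ)

/-!
Truncating a `(T + N)`-step path after `T` steps loses at most `N μ*`. Conversely, a `T`-step
path `p` can be extended to a `(T + N)`-step path gaining at least `N μ*`: if `p` meets an
optimal node, stop there; otherwise every reward of `p` is at most `μ* - Δ`, and walking to an
optimal node in `d ≤ D` steps and staying there collects at least
`(T + N + 1 - D) μ* ≥ (T + 1) (μ* - Δ) + N μ*`, because `D μ* ≤ T Δ`.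
-/

def stopAt {S : Type*} (p : ℕ → S) (t : ℕ) : ℕ → S := fun k => p (min k t)

section Paths

variable {S : Type*} {adj : S → S → Prop} {μ : S → ℝ}

theorem Adm.mono {p : ℕ → S} {T T' : ℕ} (hp : Adm adj p T) (hT : T' ≤ T) : Adm adj p T' :=
  fun t ht => hp t (by omega)

theorem Adm.stopAt (hrefl : ∀ s, adj s s) {p : ℕ → S} {t : ℕ} (hp : Adm adj p t) (T : ℕ) :
    Adm adj (stopAt p t) T := by
  intro k _
  by_cases hk : k < t
  · simpa only [_root_.stopAt, min_eq_left hk.le, min_eq_left (Nat.succ_le_of_lt hk)] using hp k hk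
  · simpa only [_root_.stopAt, min_eq_right (not_lt.1 hk), min_eq_right (by omega : t ≤ k + 1)]
      using hrefl (p t)

theorem Vpath_add (p : ℕ → S) (T N : ℕ) :
    Vpath μ p (T + N) = Vpath μ p T + ∑ i ∈ range N, μ (p (T + 1 + i)) := by
  rw [Vpath, Vpath, show T + N + 1 = T + 1 + N by omega, sum_range_add]

theorem Vpath_le_mul {p : ℕ → S} {T : ℕ} {c : ℝ} (h : ∀ k ≤ T, μ (p k) ≤ c) :
    Vpath μ p T ≤ (T + 1) * c := by
  calc Vpath μ p T ≤ ∑ _k ∈ range (T + 1), c :=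
        sum_le_sum fun k hk => h k (Nat.lt_succ_iff.1 (mem_range.1 hk))
    _ = (T + 1) * c := by simp

theorem apply_le_Vpath (hμ0 : ∀ s, 0 ≤ μ s) (p : ℕ → S) {k T : ℕ} (hk : k ≤ T) :
    μ (p k) ≤ Vpath μ p T :=
  single_le_sum (fun i _ => hμ0 (p i)) (mem_range.2 (Nat.lt_succ_of_le hk))

theorem Vpath_add_le {M : ℝ} (hmax : ∀ s, μ s ≤ M) (p : ℕ → S) (T N : ℕ) :
    Vpath μ p (T + N) ≤ Vpath μ p T + N * M := by
  rw [Vpath_add]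
  gcongr
  calc ∑ i ∈ range N, μ (p (T + 1 + i)) ≤ ∑ _i ∈ range N, M := sum_le_sum fun i _ => hmax _
    _ = N * M := by simp

theorem Vpath_stopAt_add (p : ℕ → S) (t n : ℕ) :
    Vpath μ (stopAt p t) (t + n) = Vpath μ p t + n * μ (p t) := by
  rw [Vpath_add]
  congr 1
  · refine sum_congr rfl fun k hk => ?_
    rw [stopAt, min_eq_left (Nat.lt_succ_iff.1 (mem_range.1 hk))]
  · simp [stopAt, show ∀ i, min (t + 1 + i) t = t from fun i => by omega]

theorem Vpath_le_Vopt {M : ℝ} (hmax : ∀ s, μ s ≤ M) {p : ℕ → S} {s : S} {T : ℕ}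
    (hp0 : p 0 = s) (hp : Adm adj p T) : Vpath μ p T ≤ Vopt adj μ s T :=
  le_csSup ⟨(T + 1) * M, by rintro _ ⟨q, -, -, rfl⟩; exact Vpath_le_mul fun k _ => hmax (q k)⟩
    ⟨p, hp0, hp, rfl⟩

theorem Vopt_le (hrefl : ∀ s, adj s s) {s : S} {T : ℕ} {c : ℝ}
    (h : ∀ p : ℕ → S, p 0 = s → Adm adj p T → Vpath μ p T ≤ c) : Vopt adj μ s T ≤ c :=
  csSup_le ⟨_, fun _ => s, rfl, fun _ _ => hrefl s, rfl⟩ (by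
    rintro _ ⟨p, hp0, hp, rfl⟩
    exact h p hp0 hp)

theorem Vpath_add_le_Vpath_stopAt_of_apply_eq {M : ℝ} (hmax : ∀ s, μ s ≤ M) {p : ℕ → S}
    {t T : ℕ} (htT : t ≤ T) (ht : μ (p t) = M) (N : ℕ) :
    Vpath μ p T + N * M ≤ Vpath μ (stopAt p t) (T + N) := by
  obtain ⟨n, rfl⟩ := Nat.exists_eq_add_of_le htT
  have htail := Vpath_add_le hmax p t n
  rw [add_assoc, Vpath_stopAt_add, ht]
  push_cast
  linarith

theorem Vpath_add_le_Vpath_stopAt_of_le_sub {M Δ : ℝ} (hμ0 : ∀ s, 0 ≤ μ s) (hΔ : 0 < Δ)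
    {D T : ℕ} (hT : D * M ≤ T * Δ) {p : ℕ → S} (hp : ∀ k ≤ T, μ (p k) ≤ M - Δ)
    {q : ℕ → S} {d : ℕ} (hdD : d ≤ D) (hqd : μ (q d) = M) (N : ℕ) :
    Vpath μ p T + N * M ≤ Vpath μ (stopAt q d) (T + N) := by
  have hΔM : Δ ≤ M := by linarith [hp 0 (Nat.zero_le T), hμ0 (p 0)]
  have hdM : (d : ℝ) * M ≤ D * M := by gcongr; linarith
  have hdT : d ≤ T + N := by
    have : (T : ℝ) * Δ ≤ T * M := by gcongr
    have : (d : ℝ) ≤ T := le_of_mul_le_mul_right (by linarith) (by linarith : 0 < M)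
    have : d ≤ T := by exact_mod_cast this
    omega
  obtain ⟨n, hn⟩ := Nat.exists_eq_add_of_le hdT
  have hn' : (n : ℝ) * M = (T + N - d) * M := by
    rw [show (T : ℝ) + N = d + n by exact_mod_cast hn]; ring
  have hpT := Vpath_le_mul hp
  have hqd' : M ≤ Vpath μ q d := hqd ▸ apply_le_Vpath hμ0 q le_rfl
  rw [hn, Vpath_stopAt_add, hqd]
  linarith

theorem exists_Adm_Vpath_add_le (hrefl : ∀ s, adj s s) (hμ0 : ∀ s, 0 ≤ μ s) {M : ℝ}
    (hmax : ∀ s, μ s ≤ M) (hex : ∃ s, μ s = M)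
    {Δ : ℝ} (hΔ : 0 < Δ) (hgap : ∀ s, μ s < M → μ s ≤ M - Δ) {D : ℕ}
    (hD : ∀ s s' : S, ∃ (T : ℕ) (p : ℕ → S), T ≤ D ∧ p 0 = s ∧ p T = s' ∧ Adm adj p T)
    {T : ℕ} (hT : D * M ≤ T * Δ) {s : S} {p : ℕ → S} (hp0 : p 0 = s) (hp : Adm adj p T)
    (N : ℕ) :
    ∃ q : ℕ → S, q 0 = s ∧ Adm adj q (T + N) ∧ Vpath μ p T + N * M ≤ Vpath μ q (T + N) := by
  by_cases hvisit : ∃ t ≤ T, μ (p t) = M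
  · obtain ⟨t, htT, ht⟩ := hvisit
    exact ⟨stopAt p t, by simp [stopAt, hp0], (hp.mono htT).stopAt hrefl _,
      Vpath_add_le_Vpath_stopAt_of_apply_eq hmax htT ht N⟩
  · push Not at hvisit
    obtain ⟨sstar, hsstar⟩ := hex
    obtain ⟨d, q, hdD, hq0, hqd, hq⟩ := hD s sstar
    have hlow : ∀ k ≤ T, μ (p k) ≤ M - Δ :=
      fun k hk => hgap _ ((hmax _).lt_of_ne (hvisit k hk))
    exact ⟨stopAt q d, by simp [stopAt, hq0], hq.stopAt hrefl _,
      Vpath_add_le_Vpath_stopAt_of_le_sub hμ0 hΔ hT hlow hdD (hqd ▸ hsstar) N⟩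

end Paths

theorem V_increment_general_general {S : Type*}
    (adj : S → S → Prop) (hrefl : ∀ s, adj s s)
    (μ : S → ℝ) (hμ0 : ∀ s, 0 ≤ μ s)
    (μstar : ℝ) (hmax : ∀ s, μ s ≤ μstar) (hex : ∃ s, μ s = μstar)
    (Δ : ℝ) (hΔ : 0 < Δ) (hgap : ∀ s, μ s < μstar → μ s ≤ μstar - Δ)
    (D : ℕ)
    (hD : ∀ s s' : S, ∃ (T : ℕ) (p : ℕ → S),
      T ≤ D ∧ p 0 = s ∧ p T = s' ∧ Adm adj p T)
    (T : ℕ) (hT : (D : ℝ) * μstar / Δ ≤ (T : ℝ)) :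
    ∀ (s : S) (N : ℕ), Vopt adj μ s (T + N) = Vopt adj μ s T + (N : ℝ) * μstar := by
  intro s N
  refine le_antisymm (Vopt_le hrefl fun p hp0 hp => ?_) ?_
  · calc Vpath μ p (T + N) ≤ Vpath μ p T + N * μstar := Vpath_add_le hmax p T N
      _ ≤ Vopt adj μ s T + N * μstar := by
        gcongr
        exact Vpath_le_Vopt hmax hp0 (hp.mono (Nat.le_add_right T N))
  · rw [← le_sub_iff_add_le]
    refine Vopt_le hrefl fun p hp0 hp => le_sub_iff_add_le.2 ?_
    obtain ⟨q, hq0, hq, hpq⟩ := exists_Adm_Vpath_add_le hrefl hμ0 hmax hex hΔ hgap hD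
      ((div_le_iff₀ hΔ).1 hT) hp0 hp N
    exact hpq.trans (Vpath_le_Vopt hmax hq0 hq)

/-- General V increment: if `T ≥ D μ* / Δ`, then `V(s, T+N) = V(s, T) + N μ*`. -/
theorem V_increment_general {S : Type*} [Fintype S] [Nonempty S]
    (adj : S → S → Prop) (hrefl : ∀ s, adj s s) (hsymm : ∀ s t, adj s t → adj t s)
    (μ : S → ℝ) (hμ0 : ∀ s, 0 ≤ μ s)
    (μstar : ℝ) (hmax : ∀ s, μ s ≤ μstar) (hex : ∃ s, μ s = μstar)
    (Δ : ℝ) (hΔ : 0 < Δ) (hgap : ∀ s, μ s < μstar → μ s ≤ μstar - Δ)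
    (D : ℕ)
    (hD : ∀ s s' : S, ∃ (T : ℕ) (p : ℕ → S),
      T ≤ D ∧ p 0 = s ∧ p T = s' ∧ Adm adj p T)
    (T : ℕ) (hT : (D : ℝ) * μstar / Δ ≤ (T : ℝ)) :
    ∀ (s : S) (N : ℕ), Vopt adj μ s (T + N) = Vopt adj μ s T + (N : ℝ) * μstar :=
  V_increment_general_general adj hrefl μ hμ0 μstar hmax hex Δ hΔ hgap D hD T hT
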